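/- Let A, B be positive operators and X a bounded operator on H. The block operator M = [[A, X],[X*, B]] on H ⊕ H is positive if and only if there exists a bounded operator C with X = C*B^{1/2} and C*C ≤ A. -/

import Mathlib

open ContinuousLinearMap

variable {H : Type*} [NormedAddCommGroup H] [InnerProductSpace ℂ H] [CompleteSpace H]

/-- The 2×2 block operator `[[A, X],[Y, B]]` acting on the Hilbert space `H ⊕ H`
(realized as `WithLp 2 (H × H)`). -/
noncomputable def blockOperator (A X Y B : H →L[ℂ] H) :
    WithLp 2 (H × H) →L[ℂ] WithLp 2 (H × H) :=
  (WithLp.prodContinuousLinearEquiv 2 ℂ H H).symm.toContinuousLinearMap ∘L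
    ((A ∘L ContinuousLinearMap.fst ℂ H H + X ∘L ContinuousLinearMap.snd ℂ H H).prod
      (Y ∘L ContinuousLinearMap.fst ℂ H H + B ∘L ContinuousLinearMap.snd ℂ H H)) ∘L
    (WithLp.prodContinuousLinearEquiv 2 ℂ H H).toContinuousLinearMap

/-! Write the positive block operator as `M = R† R`. Then `⟪x, X y⟫ = ⟪R (x, 0), R (0, y)⟫`,
and `‖R (0, y)‖² = ⟪B y, y⟫ = ‖B^{1/2} y‖²`, so `‖⟪x, X y⟫‖ ≤ ‖R (x, 0)‖ ‖B^{1/2} y‖`.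
Douglas' argument turns such a bound into a factorization: `D (B^{1/2} y) := X y` is well
defined and bounded on the range of `B^{1/2}`; extend it to the closure and by zero on the
orthogonal complement. Then `C := D†` satisfies `X = C† B^{1/2}`, and since `C x` lies in the
closure of the range, where its norm is detected by pairing with vectors `B^{1/2} y`, we get
`‖C x‖ ≤ ‖R (x, 0)‖`, i.e. `C† C ≤ A`. Conversely, if `X = C† B^{1/2}` and `C† C ≤ A`, then
`⟪M (x, y), (x, y)⟫ ≥ ‖C x‖² + 2 Re ⟪C x, B^{1/2} y⟫ + ‖B^{1/2} y‖² = ‖C x + B^{1/2} y‖²`. -/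

section Factorization

variable {𝕜 E F G K : Type*} [RCLike 𝕜]
  [NormedAddCommGroup E] [NormedSpace 𝕜 E]
  [NormedAddCommGroup F] [InnerProductSpace 𝕜 F]
  [NormedAddCommGroup G] [InnerProductSpace 𝕜 G] [CompleteSpace G]
  [NormedAddCommGroup K] [NormedSpace 𝕜 K]

theorem norm_le_of_norm_inner_self_le {u : F} {r : ℝ} (hr : 0 ≤ r)
    (h : ‖(inner 𝕜 u u : 𝕜)‖ ≤ r * ‖u‖) : ‖u‖ ≤ r := by
  rw [inner_self_eq_norm_sq_to_K, norm_pow, RCLike.norm_ofReal, abs_norm] at h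
  nlinarith [norm_nonneg u]

theorem Submodule.norm_le_of_mem_topologicalClosure {V : Submodule 𝕜 F} {u : F}
    (hu : u ∈ V.topologicalClosure) {r : ℝ} (hr : 0 ≤ r)
    (h : ∀ w ∈ V, ‖(inner 𝕜 u w : 𝕜)‖ ≤ r * ‖w‖) : ‖u‖ ≤ r :=
  norm_le_of_norm_inner_self_le hr <| closure_minimal h
    (isClosed_le (continuous_const.inner continuous_id).norm (continuous_const.mul continuous_norm))
    hu

variable [CompleteSpace F]

theorem exists_comp_eq_of_norm_le (S : E →L[𝕜] F) (X : E →L[𝕜] G) (c : ℝ)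
    (h : ∀ y, ‖X y‖ ≤ c * ‖S y‖) :
    ∃ D : F →L[𝕜] G, D ∘L S = X ∧ S.rangeᗮ ≤ D.ker := by
  set V := S.range.topologicalClosure
  let e : E →ₗ[𝕜] V := (V.orthogonalProjectionOnto ∘L S).toLinearMap
  have he : ∀ y, (e y : F) = S y := fun y =>
    V.starProjection_eq_self_iff.mpr (S.range.le_topologicalClosure ⟨y, rfl⟩)
  have h_dense : DenseRange e := by
    have hrange : Subtype.val '' Set.range e = S.range := by
      rw [← Set.range_comp]
      exact congrArg Set.range (funext he)
    rw [DenseRange, Subtype.dense_iff]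
    intro v hv
    have := S.range.topologicalClosure_coe.le hv
    rwa [← hrange] at this
  have h_norm : ∀ y, ‖X y‖ ≤ c * ‖e y‖ := fun y => by
    rw [Submodule.coe_norm, he]
    exact h y
  refine ⟨(X : E →ₗ[𝕜] G).extendOfNorm e ∘L V.orthogonalProjectionOnto, ?_, fun w hw => ?_⟩
  · ext y
    exact LinearMap.extendOfNorm_eq h_dense ⟨c, h_norm⟩ y
  · rw [← Submodule.orthogonal_closure, ← Submodule.ker_orthogonalProjectionOnto] at hw
    have hPw : V.orthogonalProjectionOnto w = 0 := hw
    simp [hPw]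

/-- Douglas' factorization lemma. -/
theorem exists_adjoint_comp_eq_of_norm_inner_le (S : E →L[𝕜] F) (X : E →L[𝕜] G)
    (T : G →L[𝕜] K) (h : ∀ x y, ‖(inner 𝕜 x (X y) : 𝕜)‖ ≤ ‖T x‖ * ‖S y‖) :
    ∃ C : G →L[𝕜] F, X = adjoint C ∘L S ∧ ∀ x, ‖C x‖ ≤ ‖T x‖ := by
  have hX : ∀ y, ‖X y‖ ≤ ‖T‖ * ‖S y‖ := fun y =>
    norm_le_of_norm_inner_self_le (by positivity) <| calc
      ‖(inner 𝕜 (X y) (X y) : 𝕜)‖ ≤ ‖T (X y)‖ * ‖S y‖ := h (X y) y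
      _ ≤ ‖T‖ * ‖X y‖ * ‖S y‖ := by gcongr; exact T.le_opNorm (X y)
      _ = ‖T‖ * ‖S y‖ * ‖X y‖ := by ring
  obtain ⟨D, hDS, hD⟩ := exists_comp_eq_of_norm_le S X ‖T‖ hX
  refine ⟨adjoint D, by rw [adjoint_adjoint, hDS], fun x => ?_⟩
  have hmem : adjoint D x ∈ S.range.topologicalClosure := by
    rw [← Submodule.orthogonal_orthogonal_eq_closure, Submodule.mem_orthogonal]
    intro w hw
    have hDw : D w = 0 := hD hw
    rw [adjoint_inner_right, hDw, inner_zero_left]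
  refine Submodule.norm_le_of_mem_topologicalClosure hmem (norm_nonneg _) ?_
  rintro _ ⟨y, rfl⟩
  rw [adjoint_inner_left]
  simpa [← hDS] using h x y

end Factorization

section Positive

variable {𝕜 E F : Type*} [RCLike 𝕜]
  [NormedAddCommGroup E] [InnerProductSpace 𝕜 E] [CompleteSpace E]
  [NormedAddCommGroup F] [InnerProductSpace 𝕜 F] [CompleteSpace F]

theorem isPositive_sub_adjoint_comp_self_iff {A : E →L[𝕜] E} (hA : IsSelfAdjoint A)
    (C : E →L[𝕜] F) :
    (A - adjoint C ∘L C).IsPositive ↔ ∀ x, ‖C x‖ ^ 2 ≤ RCLike.re (inner 𝕜 (A x) x) := by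
  simp only [isPositive_def', hA.sub (isPositive_adjoint_comp_self C).isSelfAdjoint, true_and,
    reApplyInnerSelf_apply, sub_apply, inner_sub_left, map_sub,
    apply_norm_sq_eq_inner_adjoint_left, sub_nonneg]

theorem IsSelfAdjoint.re_inner_comp_self_apply {S : E →L[𝕜] E} (hS : IsSelfAdjoint S) (x : E) :
    RCLike.re (inner 𝕜 ((S ∘L S) x) x) = ‖S x‖ ^ 2 := by
  rw [apply_norm_sq_eq_inner_adjoint_left, hS.adjoint_eq]

end Positive

theorem ContinuousLinearMap.IsPositive.exists_eq_adjoint_comp_self {E : Type*}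
    [NormedAddCommGroup E] [InnerProductSpace ℂ E] [CompleteSpace E] {T : E →L[ℂ] E}
    (hT : T.IsPositive) : ∃ R : E →L[ℂ] E, T = adjoint R ∘L R := by
  obtain ⟨R, hR⟩ := CStarAlgebra.nonneg_iff_eq_star_mul_self.mp ((nonneg_iff_isPositive T).mpr hT)
  exact ⟨R, by rw [hR, star_eq_adjoint]; rfl⟩

@[simp]
theorem blockOperator_apply_fst {V : Type*} [NormedAddCommGroup V] [InnerProductSpace ℂ V]
    (A X Y B : V →L[ℂ] V) (v : WithLp 2 (V × V)) :
    (blockOperator A X Y B v).fst = A v.fst + X v.snd :=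
  rfl

@[simp]
theorem blockOperator_apply_snd {V : Type*} [NormedAddCommGroup V] [InnerProductSpace ℂ V]
    (A X Y B : V →L[ℂ] V) (v : WithLp 2 (V × V)) :
    (blockOperator A X Y B v).snd = Y v.fst + B v.snd :=
  rfl

theorem adjoint_blockOperator (A X Y B : H →L[ℂ] H) :
    adjoint (blockOperator A X Y B) =
      blockOperator (adjoint A) (adjoint Y) (adjoint X) (adjoint B) := by
  refine ((eq_adjoint_iff _ _).mpr fun v w => ?_).symm
  simp only [WithLp.prod_inner_apply, WithLp.ofLp_fst, WithLp.ofLp_snd, blockOperator_apply_fst,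
    blockOperator_apply_snd, inner_add_left, inner_add_right, adjoint_inner_left]
  ring

theorem isSelfAdjoint_blockOperator {A B : H →L[ℂ] H} (hA : IsSelfAdjoint A)
    (hB : IsSelfAdjoint B) (X : H →L[ℂ] H) :
    IsSelfAdjoint (blockOperator A X (adjoint X) B) := by
  rw [IsSelfAdjoint, star_eq_adjoint, adjoint_blockOperator, adjoint_adjoint, hA.adjoint_eq,
    hB.adjoint_eq]

theorem re_inner_blockOperator_self (A X B : H →L[ℂ] H) (v : WithLp 2 (H × H)) :
    RCLike.re (inner ℂ (blockOperator A X (adjoint X) B v) v) =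
      RCLike.re (inner ℂ (A v.fst) v.fst) + 2 * RCLike.re (inner ℂ (X v.snd) v.fst)
        + RCLike.re (inner ℂ (B v.snd) v.snd) := by
  simp only [WithLp.prod_inner_apply, WithLp.ofLp_fst, WithLp.ofLp_snd, blockOperator_apply_fst,
    blockOperator_apply_snd, inner_add_left, adjoint_inner_left, map_add]
  rw [inner_re_symm v.fst]
  ring

theorem exists_factor_of_isPositive_blockOperator {A B X SB : H →L[ℂ] H}
    (hA : IsSelfAdjoint A) (hSB : IsSelfAdjoint SB) (hSB2 : SB ∘L SB = B)
    (hM : (blockOperator A X (adjoint X) B).IsPositive) :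
    ∃ C : H →L[ℂ] H, X = adjoint C ∘L SB ∧ (A - adjoint C ∘L C).IsPositive := by
  obtain ⟨R, hR⟩ := hM.exists_eq_adjoint_comp_self
  let ι₁ : H →L[ℂ] WithLp 2 (H × H) :=
    (WithLp.prodContinuousLinearEquiv 2 ℂ H H).symm.toContinuousLinearMap ∘L inl ℂ H H
  have hnorm_sq : ∀ v, ‖R v‖ ^ 2 = RCLike.re (inner ℂ (blockOperator A X (adjoint X) B v) v) := by
    intro v; rw [hR, apply_norm_sq_eq_inner_adjoint_left]
  have hR₁ : ∀ x, ‖R (ι₁ x)‖ ^ 2 = RCLike.re (inner ℂ (A x) x) := by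
    intro x; simp [hnorm_sq, ι₁]
  have hR₂ : ∀ y, ‖R (WithLp.toLp 2 (0, y))‖ = ‖SB y‖ := by
    intro y
    have := hnorm_sq (WithLp.toLp 2 (0, y))
    rw [re_inner_blockOperator_self, ← hSB2, hSB.re_inner_comp_self_apply] at this
    simpa using this
  have hCS : ∀ x y, ‖(inner ℂ x (X y) : ℂ)‖ ≤ ‖(R ∘L ι₁) x‖ * ‖SB y‖ := fun x y => calc
    ‖(inner ℂ x (X y) : ℂ)‖
        = ‖(inner ℂ (blockOperator A X (adjoint X) B (ι₁ x)) (WithLp.toLp 2 (0, y)) : ℂ)‖ := by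
      simp [WithLp.prod_inner_apply, ι₁, adjoint_inner_left]
    _ = ‖(inner ℂ (R (ι₁ x)) (R (WithLp.toLp 2 (0, y))) : ℂ)‖ := by
      rw [hR, comp_apply, adjoint_inner_left]
    _ ≤ ‖(R ∘L ι₁) x‖ * ‖SB y‖ := by
      rw [← hR₂]
      exact norm_inner_le_norm _ _
  obtain ⟨C, hXC, hC⟩ := exists_adjoint_comp_eq_of_norm_inner_le SB X (R ∘L ι₁) hCS
  refine ⟨C, hXC, (isPositive_sub_adjoint_comp_self_iff hA C).mpr fun x => ?_⟩
  rw [← hR₁]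
  exact pow_le_pow_left₀ (norm_nonneg _) (hC x) 2

theorem isPositive_blockOperator_of_factor {A B X SB C : H →L[ℂ] H}
    (hA : IsSelfAdjoint A) (hB : IsSelfAdjoint B) (hSB : IsSelfAdjoint SB) (hSB2 : SB ∘L SB = B)
    (hXC : X = adjoint C ∘L SB) (hAC : (A - adjoint C ∘L C).IsPositive) :
    (blockOperator A X (adjoint X) B).IsPositive := by
  refine isPositive_def'.mpr ⟨isSelfAdjoint_blockOperator hA hB X, fun v => ?_⟩
  rw [reApplyInnerSelf_apply, re_inner_blockOperator_self]
  have hCA := (isPositive_sub_adjoint_comp_self_iff hA C).mp hAC v.fst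
  have hX : RCLike.re (inner ℂ (X v.snd) v.fst) = RCLike.re (inner ℂ (C v.fst) (SB v.snd)) := by
    rw [hXC, comp_apply, adjoint_inner_left, inner_re_symm]
  have hB' : RCLike.re (inner ℂ (B v.snd) v.snd) = ‖SB v.snd‖ ^ 2 :=
    hSB2 ▸ hSB.re_inner_comp_self_apply _
  calc 0 ≤ ‖C v.fst + SB v.snd‖ ^ 2 := by positivity
    _ = ‖C v.fst‖ ^ 2 + 2 * RCLike.re (inner ℂ (C v.fst) (SB v.snd)) + ‖SB v.snd‖ ^ 2 :=
      norm_add_sq _ _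
    _ ≤ _ := by rw [hX, hB']; linarith

theorem blockOperator_isPositive_iff_factor
    (A B X SB : H →L[ℂ] H) (hA : A.IsPositive) (hB : B.IsPositive)
    (hSB : SB.IsPositive) (hSB2 : SB ∘L SB = B) :
    (blockOperator A X (adjoint X) B).IsPositive ↔
      ∃ C : H →L[ℂ] H, X = adjoint C ∘L SB ∧ (A - adjoint C ∘L C).IsPositive := by
  refine ⟨exists_factor_of_isPositive_blockOperator hA.isSelfAdjoint hSB.isSelfAdjoint hSB2, ?_⟩
  rintro ⟨C, hXC, hAC⟩
  exact isPositive_blockOperator_of_factor hA.isSelfAdjoint hB.isSelfAdjoint hSB.isSelfAdjoint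
    hSB2 hXC hAC
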